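/- For each integer m ≥ 2 set T_m² = −2m·log(0.05) and define a(m) = (2·0.05·0.95) / [ (1 − T_m²/(2m²))^{m−1} − (1 − T_m²/(2m²))^{2m−2} + (m−1)·( (1 − T_m²/m²)^{m−1} − (1 − T_m²/(2m²))^{2m−2} ) ]. Then a(m) converges as m → ∞ to (2·0.05·0.95) / (0.05·0.95 − 0.05²·(log 0.05)²), a number approximately equal to 3.7903. -/

import Mathlib

open Filter Real

/-- The squared DFT-test threshold for `n = 2m`: `T_m² = −2m·log(0.05)`. -/
noncomputable def Tsq (m : ℕ) : ℝ := -2 * m * Real.log 0.05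

/-- The variance-correction factor `a(m)` defined so that the derived variance of the
DFT-test statistic `N₁` equals `0.95·0.05·n/a(m)` with `n = 2m`. -/
noncomputable def aFactor (m : ℕ) : ℝ :=
  (2 * 0.05 * 0.95) /
    ((1 - Tsq m / (2 * (m : ℝ) ^ 2)) ^ (m - 1) -
        (1 - Tsq m / (2 * (m : ℝ) ^ 2)) ^ (2 * m - 2) +
      ((m : ℝ) - 1) * ((1 - Tsq m / (m : ℝ) ^ 2) ^ (m - 1) -
        (1 - Tsq m / (2 * (m : ℝ) ^ 2)) ^ (2 * m - 2)))

open Finset Topology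

/-! With `x = 1 + t/m` and `y = 1 + 2t/m`, where `t = log 0.05`, the first two terms of the
denominator of `a(m)` tend to `eᵗ` and `e²ᵗ`. In the last one, `(m - 1)((x²)^(m-1) - y^(m-1))`,
the gap `x² - y = t²/m²` is of second order, and the bounds
`n bⁿ⁻¹ (a - b) ≤ aⁿ - bⁿ ≤ n aⁿ⁻¹ (a - b)` squeeze it between two sequences tending to `t² e²ᵗ`. -/

section PowSubPow
variable {R : Type*} [CommRing R] [PartialOrder R] [IsOrderedRing R] {a b : R}

theorem mul_pow_sub_one_mul_sub_le_pow_sub_pow (hb : 0 ≤ b) (hba : b ≤ a) (n : ℕ) :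
    n * b ^ (n - 1) * (a - b) ≤ a ^ n - b ^ n := by
  rw [← geom_sum₂_mul]
  gcongr ?_ * _
  calc (n : R) * b ^ (n - 1) = ∑ _i ∈ range n, b ^ (n - 1) := by simp
    _ ≤ ∑ i ∈ range n, a ^ i * b ^ (n - 1 - i) := sum_le_sum fun i hi => by
      calc b ^ (n - 1) = b ^ i * b ^ (n - 1 - i) := by
            rw [← pow_add]; congr 1; have := mem_range.1 hi; omega
        _ ≤ a ^ i * b ^ (n - 1 - i) := by gcongr

theorem pow_sub_pow_le_mul_pow_sub_one_mul_sub (hb : 0 ≤ b) (hba : b ≤ a) (n : ℕ) :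
    a ^ n - b ^ n ≤ n * a ^ (n - 1) * (a - b) := by
  have ha : 0 ≤ a := hb.trans hba
  rw [← geom_sum₂_mul]
  gcongr ?_ * _
  calc ∑ i ∈ range n, a ^ i * b ^ (n - 1 - i) ≤ ∑ _i ∈ range n, a ^ (n - 1) :=
        sum_le_sum fun i hi => by
          calc a ^ i * b ^ (n - 1 - i) ≤ a ^ i * a ^ (n - 1 - i) := by gcongr
            _ = a ^ (n - 1) := by rw [← pow_add]; congr 1; have := mem_range.1 hi; omega
    _ = n * a ^ (n - 1) := by simp

end PowSubPow

theorem tendsto_one_add_div_natCast (t : ℝ) :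
    Tendsto (fun m : ℕ => 1 + t / m) atTop (𝓝 1) := by
  simpa using (tendsto_const_div_atTop_nhds_zero_nat t).const_add 1

theorem tendsto_one_add_div_pow_sub_exp (t : ℝ) (d : ℕ) :
    Tendsto (fun m : ℕ => (1 + t / m) ^ (m - d)) atTop (𝓝 (exp t)) := by
  have hbase := tendsto_one_add_div_natCast t
  have hquot := (tendsto_one_add_div_pow_exp t).div (hbase.pow d) (by simp)
  rw [one_pow, div_one] at hquot
  refine hquot.congr' ?_
  filter_upwards [eventually_ge_atTop d, hbase.eventually_ne one_ne_zero] with m hdm hm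
  rw [Pi.div_apply, eq_comm, eq_div_iff (pow_ne_zero d hm), pow_sub_mul_pow _ hdm]

theorem tendsto_sub_one_mul_one_add_div_pow_sub (t : ℝ) :
    Tendsto (fun m : ℕ => ((m : ℝ) - 1) * ((1 + t / m) ^ (2 * m - 2) - (1 + 2 * t / m) ^ (m - 1)))
      atTop (𝓝 (t ^ 2 * exp (2 * t))) := by
  have hfactor : Tendsto (fun m : ℕ => (1 - 1 / (m : ℝ)) ^ 2 * t ^ 2) atTop (𝓝 (t ^ 2)) := by
    have h := (tendsto_const_div_atTop_nhds_zero_nat (1 : ℝ)).const_sub 1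
    simpa using (h.pow 2).mul_const (t ^ 2)
  have hlower := hfactor.mul (tendsto_one_add_div_pow_sub_exp (2 * t) 2)
  have hupper := hfactor.mul ((tendsto_one_add_div_pow_sub_exp t 2).pow 2)
  rw [← exp_nat_mul, Nat.cast_ofNat] at hupper
  have hbounds : ∀ᶠ m : ℕ in atTop,
      (1 - 1 / (m : ℝ)) ^ 2 * t ^ 2 * (1 + 2 * t / m) ^ (m - 2) ≤
          ((m : ℝ) - 1) * ((1 + t / m) ^ (2 * m - 2) - (1 + 2 * t / m) ^ (m - 1)) ∧
        ((m : ℝ) - 1) * ((1 + t / m) ^ (2 * m - 2) - (1 + 2 * t / m) ^ (m - 1)) ≤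
          (1 - 1 / (m : ℝ)) ^ 2 * t ^ 2 * ((1 + t / m) ^ (m - 2)) ^ 2 := by
    filter_upwards [eventually_ge_atTop 2,
      (tendsto_one_add_div_natCast (2 * t)).eventually_const_le one_pos] with m hm hy
    have hm0 : (m : ℝ) ≠ 0 := by positivity
    have hgap : (1 + t / m) ^ 2 - (1 + 2 * t / m) = t ^ 2 / m ^ 2 := by field_simp; ring
    have hle : 1 + 2 * t / m ≤ (1 + t / m) ^ 2 := sub_nonneg.1 (hgap ▸ by positivity)
    have hcast : ((m - 1 : ℕ) : ℝ) = m - 1 := by rw [Nat.cast_pred (by omega)]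
    have hcoef : (1 - 1 / (m : ℝ)) ^ 2 * t ^ 2 = (m - 1) * (m - 1) * (t ^ 2 / m ^ 2) := by
      field_simp
    rw [show 2 * m - 2 = 2 * (m - 1) by omega, pow_mul, hcoef, ← hgap,
      show m - 2 = m - 1 - 1 by omega, ← hcast]
    constructor
    · rw [mul_assoc, mul_assoc]
      gcongr
      simpa [mul_comm, mul_left_comm, mul_assoc] using
        mul_pow_sub_one_mul_sub_le_pow_sub_pow hy hle (m - 1)
    · rw [pow_right_comm _ (m - 1 - 1) 2, mul_assoc, mul_assoc]
      gcongr
      simpa [mul_comm, mul_left_comm, mul_assoc] using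
        pow_sub_pow_le_mul_pow_sub_one_mul_sub hy hle (m - 1)
  exact tendsto_of_tendsto_of_tendsto_of_le_of_le' hlower hupper (hbounds.mono fun _ h => h.1)
    (hbounds.mono fun _ h => h.2)

/-- At `t = log 0.05` this is the denominator of `aFactor`, since `T_m²/(2m²) = -t/m`. -/
noncomputable def aFactorDenom (t : ℝ) (m : ℕ) : ℝ :=
  (1 + t / m) ^ (m - 1) - (1 + t / m) ^ (2 * m - 2) +
    ((m : ℝ) - 1) * ((1 + 2 * t / m) ^ (m - 1) - (1 + t / m) ^ (2 * m - 2))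

theorem tendsto_aFactorDenom (t : ℝ) :
    Tendsto (aFactorDenom t) atTop (𝓝 (exp t - exp (2 * t) - t ^ 2 * exp (2 * t))) := by
  have hfirst := tendsto_one_add_div_pow_sub_exp t 1
  have hsecond : Tendsto (fun m : ℕ => (1 + t / m) ^ (2 * m - 2)) atTop (𝓝 (exp (2 * t))) := by
    rw [two_mul, exp_add, ← sq]
    refine (hfirst.pow 2).congr fun m => ?_
    rw [← pow_mul]
    congr 1
    omega
  refine ((hfirst.sub hsecond).sub (tendsto_sub_one_mul_one_add_div_pow_sub t)).congr fun m => ?_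
  rw [aFactorDenom]
  ring

theorem aFactor_eq (m : ℕ) : aFactor m = 2 * 0.05 * 0.95 / aFactorDenom (log 0.05) m := by
  have hhalf : Tsq m / (2 * (m : ℝ) ^ 2) = -(log 0.05 / m) := by
    rcases m.eq_zero_or_pos with rfl | hm
    · simp [Tsq]
    · rw [Tsq]
      field_simp
  have hfull : Tsq m / (m : ℝ) ^ 2 = -(2 * log 0.05 / m) := by
    rw [show Tsq m / (m : ℝ) ^ 2 = 2 * (Tsq m / (2 * (m : ℝ) ^ 2)) by ring, hhalf]
    ring
  rw [aFactor, aFactorDenom, hhalf, hfull, sub_neg_eq_add, sub_neg_eq_add]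

theorem log_twenty_gt : 2.9957 < log 20 := by
  have he : exp 3 < 2.7182818286 ^ 3 := by
    rw [show (3 : ℝ) = (3 : ℕ) by norm_num, ← exp_one_pow]
    exact pow_lt_pow_left₀ exp_one_lt_d9 (exp_pos 1).le (by norm_num)
  have hlog : log (exp 3 / 20) = 3 - log 20 := by
    rw [log_div (exp_ne_zero 3) (by norm_num), log_exp]
  nlinarith [log_le_sub_one_of_pos (by positivity : 0 < exp 3 / 20)]

theorem log_twenty_lt : log 20 < 2.9958 := by
  have he : (2.7182818283 : ℝ) ^ 3 < exp 3 := by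
    rw [show (3 : ℝ) = (3 : ℕ) by norm_num, ← exp_one_pow]
    exact pow_lt_pow_left₀ exp_one_gt_d9 (by norm_num) (by norm_num)
  have hlog : log (20 / exp 3) = log 20 - 3 := by
    rw [log_div (by norm_num) (exp_ne_zero 3), log_exp]
  have hquot : 20 / exp 3 < 20 / 2.7182818283 ^ 3 :=
    div_lt_div_of_pos_left (by norm_num) (by positivity) he
  nlinarith [log_le_sub_one_of_pos (by positivity : 0 < 20 / exp 3)]

theorem log_point_zero_five_sq_mem :
    (log 0.05) ^ 2 ∈ Set.Ioo 8.9742 8.9749 := by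
  rw [show (0.05 : ℝ) = 20⁻¹ by norm_num, log_inv, neg_sq]
  have := log_twenty_gt
  have := log_twenty_lt
  constructor <;> nlinarith

theorem aFactor_limit_denom_pos : (0 : ℝ) < 0.05 * 0.95 - 0.05 ^ 2 * (log 0.05) ^ 2 := by
  linarith [log_point_zero_five_sq_mem.2]

theorem aFactor_limit_approx :
    |(2 * 0.05 * 0.95) / (0.05 * 0.95 - 0.05 ^ 2 * (log 0.05) ^ 2) - 3.7903| < 0.001 := by
  obtain ⟨hlo, hhi⟩ := log_point_zero_five_sq_mem
  have hpos := aFactor_limit_denom_pos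
  have hupper : (2 * 0.05 * 0.95) / (0.05 * 0.95 - 0.05 ^ 2 * (log 0.05) ^ 2) < 3.7913 := by
    rw [div_lt_iff₀ hpos]; linarith
  have hlower : 3.7893 < (2 * 0.05 * 0.95) / (0.05 * 0.95 - 0.05 ^ 2 * (log 0.05) ^ 2) := by
    rw [lt_div_iff₀ hpos]; linarith
  rw [abs_sub_lt_iff]
  constructor <;> linarith

/-- As `m → ∞`, the factor `a(m)` converges to
`(2·0.05·0.95) / (0.05·0.95 − 0.05²·(log 0.05)²)`, a number approximately `3.7903`. -/
theorem aFactor_tendsto :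
    Tendsto aFactor atTop
        (nhds ((2 * 0.05 * 0.95) /
          (0.05 * 0.95 - 0.05 ^ 2 * (Real.log 0.05) ^ 2))) ∧
      |(2 * 0.05 * 0.95) / (0.05 * 0.95 - 0.05 ^ 2 * (Real.log 0.05) ^ 2)
        - 3.7903| < 0.001 := by
  have hden := tendsto_aFactorDenom (log 0.05)
  rw [two_mul, exp_add, exp_log (by norm_num)] at hden
  have hlimit : (0.05 : ℝ) - 0.05 * 0.05 - log 0.05 ^ 2 * (0.05 * 0.05) =
      0.05 * 0.95 - 0.05 ^ 2 * (log 0.05) ^ 2 := by ring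
  rw [hlimit] at hden
  refine ⟨?_, aFactor_limit_approx⟩
  rw [funext aFactor_eq]
  exact tendsto_const_nhds.div hden aFactor_limit_denom_pos.ne'
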